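/- arXiv:1407.1275 — 2 statements merged into one kernel-verified Lean document; each statement's English description precedes it below -/
import Mathlib

section
/- Let T = S U S^{-1} where U = diag(λ_1,…,λ_d) is unitary with pairwise distinct λ_j and S ∈ GL_d(ℂ) has unit column vectors. Then the Cesàro asymptotic limit of T equals (S S^*)^{-1}, i.e., lim_{n→∞} (1/n)·∑_{j=1}^n T^{*j}T^j = S^{*-1} S^{-1}. -/
/-!
Conjugating by `S`, the `j`-th term is `T^{*j} T^j = S^{*-1} (U^{*j} (S^* S) U^j) S⁻¹`. The `(i, k)`
entry of `U^{*j} A U^j` is `A i k * (conj λ_i * λ_k) ^ j`, and `conj λ_i * λ_k` is a unimodular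
number that equals `1` exactly when `i = k`. Geometric sums of a unimodular ratio `≠ 1` are
bounded, so the Cesàro means of the inner matrices tend to the diagonal part of `S^* S`, which is
the identity because the columns of `S` are unit vectors. Hence the limit is
`S^{*-1} S⁻¹ = (S S^*)⁻¹`.
-/

open Filter Topology Finset

open scoped Matrix ComplexConjugate

noncomputable def cesaroMean {E : Type*} [AddCommMonoid E] [Module ℂ E] (u : ℕ → E) (n : ℕ) :
    E :=
  (n : ℂ)⁻¹ • ∑ j ∈ range n, u (j + 1)

section CesaroMean

variable {E : Type*} [AddCommMonoid E] [Module ℂ E]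

theorem cesaroMean_const_smul (c : ℂ) (u : ℕ → E) (n : ℕ) :
    cesaroMean (fun j => c • u j) n = c • cesaroMean u n := by
  simp only [cesaroMean, ← smul_sum, smul_comm c]

theorem tendsto_cesaroMean_const [TopologicalSpace E] (c : E) :
    Tendsto (cesaroMean fun _ => c) atTop (𝓝 c) := by
  refine tendsto_const_nhds.congr' ?_
  filter_upwards [eventually_ne_atTop 0] with n hn
  simp [cesaroMean, sum_const, ← Nat.cast_smul_eq_nsmul ℂ, smul_smul, hn]

end CesaroMean

theorem tendsto_cesaroMean_pow_of_ne_one {μ : ℂ} (hμ : ‖μ‖ ≤ 1) (h1 : μ ≠ 1) :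
    Tendsto (cesaroMean (μ ^ ·)) atTop (𝓝 0) := by
  have hpos : 0 < ‖μ - 1‖ := norm_pos_iff.2 (sub_ne_zero.2 h1)
  refine squeeze_zero_norm (fun n => ?_) (tendsto_const_div_atTop_nhds_zero_nat (2 / ‖μ - 1‖))
  have hsum : ∑ j ∈ range n, μ ^ (j + 1) = μ * ((μ ^ n - 1) / (μ - 1)) := by
    simp only [pow_succ', ← mul_sum, geom_sum_eq h1]
  have hpow : ‖μ ^ n - 1‖ ≤ 2 := by
    calc ‖μ ^ n - 1‖ ≤ ‖μ‖ ^ n + 1 := by simpa using norm_sub_le (μ ^ n) 1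
      _ ≤ 2 := by linarith [pow_le_one₀ (norm_nonneg μ) hμ (n := n)]
  calc ‖cesaroMean (μ ^ ·) n‖ = (n : ℝ)⁻¹ * (‖μ‖ * (‖μ ^ n - 1‖ / ‖μ - 1‖)) := by
        simp [cesaroMean, hsum]
    _ ≤ (n : ℝ)⁻¹ * (1 * (2 / ‖μ - 1‖)) := by gcongr
    _ = 2 / ‖μ - 1‖ / n := by ring

theorem tendsto_cesaroMean_pow {μ : ℂ} (hμ : ‖μ‖ ≤ 1) :
    Tendsto (cesaroMean (μ ^ ·)) atTop (𝓝 (if μ = 1 then 1 else 0)) := by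
  split_ifs with h1
  · simpa [h1] using tendsto_cesaroMean_const (1 : ℂ)
  · exact tendsto_cesaroMean_pow_of_ne_one hμ h1

theorem Complex.conj_mul_eq_one_iff {a b : ℂ} (ha : ‖a‖ = 1) : conj a * b = 1 ↔ a = b := by
  rw [← Complex.inv_eq_conj ha, inv_mul_eq_one₀ (norm_ne_zero_iff.1 (ha ▸ one_ne_zero))]

namespace Matrix

theorem cesaroMean_apply {m n : Type*} (u : ℕ → Matrix m n ℂ) (N : ℕ) (i : m) (k : n) :
    cesaroMean u N i k = cesaroMean (fun j => u j i k) N := by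
  simp [cesaroMean, sum_apply]

theorem cesaroMean_mul_mul {l m n p : Type*} [Fintype m] [Fintype n] (B : Matrix l m ℂ)
    (C : Matrix n p ℂ) (u : ℕ → Matrix m n ℂ) :
    cesaroMean (fun j => B * u j * C) = fun N => B * cesaroMean u N * C := by
  funext N
  simp only [cesaroMean, Matrix.mul_smul, Matrix.smul_mul, Matrix.mul_sum, Matrix.sum_mul]

theorem conj_pow {n R : Type*} [Fintype n] [DecidableEq n] [CommRing R] {S : Matrix n n R}
    (hS : IsUnit S) (D : Matrix n n R) (m : ℕ) : (S * D * S⁻¹) ^ m = S * D ^ m * S⁻¹ := by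
  obtain ⟨u, rfl⟩ := hS
  rw [← coe_units_inv, Units.conj_pow]

theorem conjTranspose_mul_self_apply_self {m n : Type*} [Fintype m] (S : Matrix m n ℂ) (i : n) :
    (Sᴴ * S) i i = ∑ k, (‖S k i‖ ^ 2 : ℝ) := by
  simp [mul_apply, Complex.conj_mul']

theorem tendsto_cesaroMean_diagonal_conj {n : Type*} [Fintype n] [DecidableEq n]
    {lam : n → ℂ} (hlam : ∀ i, ‖lam i‖ = 1) (hinj : Function.Injective lam) (A : Matrix n n ℂ) :
    Tendsto (cesaroMean fun m => (diagonal lam ^ m)ᴴ * A * diagonal lam ^ m) atTop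
      (𝓝 (diagonal fun i => A i i)) := by
  refine tendsto_pi_nhds.2 fun i => tendsto_pi_nhds.2 fun k => ?_
  have hentry : ∀ m, ((diagonal lam ^ m)ᴴ * A * diagonal lam ^ m) i k
      = A i k • (conj (lam i) * lam k) ^ m := by
    intro m
    simp only [diagonal_pow, diagonal_conjTranspose, star_pow, mul_diagonal, diagonal_mul,
      Pi.pow_apply, Pi.star_apply, RCLike.star_def, mul_pow, smul_eq_mul]
    ring
  simp only [cesaroMean_apply, hentry, cesaroMean_const_smul]
  have hμ : ‖conj (lam i) * lam k‖ ≤ 1 := by simp [hlam]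
  convert (tendsto_cesaroMean_pow hμ).const_smul (A i k) using 2
  simp only [Complex.conj_mul_eq_one_iff (hlam i), hinj.eq_iff, diagonal_apply]
  by_cases hik : i = k <;> simp [hik]

end Matrix

/-- If `T = S U S⁻¹` where `U = diag(λ_1, …, λ_d)` is a diagonal unitary with pairwise
distinct unimodular diagonal entries and `S` is invertible with unit column vectors, then
the Cesàro asymptotic limit of `T` equals `(S S^*)⁻¹ = S^{*-1} S⁻¹`. -/
theorem cesaro_asymptotic_limit_of_C11 (d : ℕ) (S : Matrix (Fin d) (Fin d) ℂ)
    (hS : IsUnit S) (hcols : ∀ j : Fin d, ∑ i : Fin d, ‖S i j‖ ^ 2 = 1)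
    (lam : Fin d → ℂ) (hlam : ∀ i, ‖lam i‖ = 1) (hdist : Function.Injective lam)
    (T : Matrix (Fin d) (Fin d) ℂ) (hT : T = S * Matrix.diagonal lam * S⁻¹) :
    Tendsto (fun n : ℕ =>
        ((n : ℂ)⁻¹ • ∑ j ∈ Finset.range n, (T ^ (j + 1))ᴴ * T ^ (j + 1)))
      atTop (nhds ((S * Sᴴ)⁻¹)) := by
  have hterm : ∀ m, (T ^ m)ᴴ * T ^ m
      = (S⁻¹)ᴴ * ((Matrix.diagonal lam ^ m)ᴴ * (Sᴴ * S) * Matrix.diagonal lam ^ m) * S⁻¹ := by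
    intro m
    rw [hT, Matrix.conj_pow hS]
    simp only [Matrix.conjTranspose_mul, Matrix.mul_assoc]
  have hdiag : (Matrix.diagonal fun i => (Sᴴ * S) i i) = 1 := by
    simp [Matrix.conjTranspose_mul_self_apply_self, hcols]
  have hlim : (S * Sᴴ)⁻¹ = (S⁻¹)ᴴ * (Matrix.diagonal fun i => (Sᴴ * S) i i) * S⁻¹ := by
    rw [hdiag, Matrix.mul_one, Matrix.mul_inv_rev, Matrix.conjTranspose_nonsing_inv]
  change Tendsto (cesaroMean fun m => (T ^ m)ᴴ * T ^ m) atTop _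
  simp only [hterm, Matrix.cesaroMean_mul_mul, hlim]
  exact (tendsto_const_nhds.mul (Matrix.tendsto_cesaroMean_diagonal_conj hlam hdist _)).mul
    tendsto_const_nhds
end

section
/- Let L be a Banach limit and T a power-bounded operator on a complex Hilbert space H with L-asymptotic limit A_{T,L} ≠ 0, where A_{T,L} is the positive operator with ⟨A_{T,L}x,y⟩ = L(⟨T^n x, T^n y⟩). Then ‖A_{T,L}‖ ≥ 1. -/
/-! Shift invariance of `L` makes the quadratic form `x ↦ ⟪A x, x⟫` invariant under `T`, and
positivity of `L` makes it nonnegative. For `x` with `s = ⟪A x, x⟫ > 0` this gives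
`s = ⟪A (Tⁿ x), Tⁿ x⟫ ≤ ‖A‖ ‖Tⁿ x‖²` for every `n`, and applying `L`, which sends `‖Tⁿ x‖²`
back to `s`, yields `s ≤ ‖A‖ s`. -/

open Filter BoundedContinuousFunction

local notation "⟪" x ", " y "⟫" => @inner ℂ _ _ x y

/-- `L` is a Banach limit: a norm-one continuous linear functional on bounded complex
sequences which extends ordinary limits, is positive on nonnegative real sequences,
and is shift-invariant. -/
structure IsBanachLimit (L : (ℕ →ᵇ ℂ) →L[ℂ] ℂ) : Prop where
  norm_eq_one : ‖L‖ = 1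
  tendsto_imp : ∀ (x : ℕ →ᵇ ℂ) (c : ℂ), Tendsto (⇑x) atTop (nhds c) → L x = c
  positive : ∀ x : ℕ →ᵇ ℂ, (∀ n, ∃ r : ℝ, 0 ≤ r ∧ x n = r) → ∃ s : ℝ, 0 ≤ s ∧ L x = s
  shift_invariant : ∀ x : ℕ →ᵇ ℂ,
    L (x.compContinuous ⟨fun n => n + 1, continuous_of_discreteTopology⟩) = L x

open scoped ComplexOrder

namespace IsBanachLimit

variable {L : (ℕ →ᵇ ℂ) →L[ℂ] ℂ}

theorem map_const (hL : IsBanachLimit L) (c : ℂ) : L (const ℕ c) = c :=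
  hL.tendsto_imp _ c tendsto_const_nhds

theorem nonneg (hL : IsBanachLimit L) {f : ℕ →ᵇ ℂ} (hf : ∀ n, 0 ≤ f n) : 0 ≤ L f := by
  obtain ⟨s, hs, hLf⟩ := hL.positive f fun n => by
    obtain ⟨r, hr, hfr⟩ := RCLike.nonneg_iff_exists_ofReal.mp (hf n)
    exact ⟨r, hr, hfr.symm⟩
  exact hLf ▸ Complex.zero_le_real.mpr hs

theorem mono (hL : IsBanachLimit L) {f g : ℕ →ᵇ ℂ} (h : ∀ n, f n ≤ g n) : L f ≤ L g := by
  have := hL.nonneg (f := g - f) fun n => sub_nonneg.mpr (h n)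
  rwa [map_sub, sub_nonneg] at this

theorem le_map_of_forall_le (hL : IsBanachLimit L) {c : ℂ} {f : ℕ →ᵇ ℂ} (h : ∀ n, c ≤ f n) :
    c ≤ L f :=
  hL.map_const c ▸ hL.mono h

end IsBanachLimit

section

variable {H : Type*} [NormedAddCommGroup H] [InnerProductSpace ℂ H]

theorem exists_inner_map_self_ne_zero {A : H →L[ℂ] H} (hA : A ≠ 0) : ∃ x, ⟪A x, x⟫ ≠ 0 := by
  by_contra! h
  exact hA (ContinuousLinearMap.coe_injective ((inner_map_self_eq_zero (A : H →ₗ[ℂ] H)).mp h))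

theorem inner_map_self_le_norm_mul_inner_self {A : H →L[ℂ] H} {y : H} (h : 0 ≤ ⟪A y, y⟫) :
    ⟪A y, y⟫ ≤ ‖A‖ * ⟪y, y⟫ := by
  rw [Complex.eq_coe_norm_of_nonneg h, inner_self_eq_norm_sq_to_K, RCLike.ofReal_eq_complex_ofReal]
  have : ‖⟪A y, y⟫‖ ≤ ‖A‖ * ‖y‖ ^ 2 :=
    calc ‖⟪A y, y⟫‖ ≤ ‖A y‖ * ‖y‖ := norm_inner_le_norm _ _
      _ ≤ ‖A‖ * ‖y‖ * ‖y‖ := by gcongr; exact A.le_opNorm y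
      _ = ‖A‖ * ‖y‖ ^ 2 := by ring
  exact_mod_cast this

theorem exists_boundedContinuousFunction_eq_inner_pow {T : H →L[ℂ] H}
    (hT : ∃ M, ∀ n : ℕ, ‖T ^ n‖ ≤ M) (x y : H) :
    ∃ f : ℕ →ᵇ ℂ, ∀ n, f n = ⟪(T ^ n) x, (T ^ n) y⟫ := by
  obtain ⟨M, hM⟩ := hT
  have hM0 : 0 ≤ M := (norm_nonneg _).trans (hM 0)
  refine ⟨ofNormedAddCommGroup _ continuous_of_discreteTopology (M * ‖x‖ * (M * ‖y‖))
    fun n => ?_, fun n => rfl⟩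
  exact (norm_inner_le_norm _ _).trans <| mul_le_mul ((T ^ n).le_of_opNorm_le (hM n) x)
    ((T ^ n).le_of_opNorm_le (hM n) y) (norm_nonneg _) (by positivity)

def IsAsymptoticLimit (L : (ℕ →ᵇ ℂ) →L[ℂ] ℂ) (T A : H →L[ℂ] H) : Prop :=
  ∀ (x y : H) (f : ℕ →ᵇ ℂ), (∀ n : ℕ, f n = ⟪(T ^ n) x, (T ^ n) y⟫) → L f = ⟪A x, y⟫

namespace IsAsymptoticLimit

variable {L : (ℕ →ᵇ ℂ) →L[ℂ] ℂ} {T A : H →L[ℂ] H}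

theorem inner_map_map (hA : IsAsymptoticLimit L T A) (hL : IsBanachLimit L)
    (hT : ∃ M, ∀ n : ℕ, ‖T ^ n‖ ≤ M) (x y : H) : ⟪A (T x), T y⟫ = ⟪A x, y⟫ := by
  obtain ⟨f, hf⟩ := exists_boundedContinuousFunction_eq_inner_pow hT x y
  rw [← hA x y f hf, ← hL.shift_invariant]
  refine (hA _ _ _ fun n => ?_).symm
  rw [compContinuous_apply, ContinuousMap.coe_mk, hf, pow_succ, mul_apply_eq_comp,
    mul_apply_eq_comp]

theorem inner_map_pow_map_pow (hA : IsAsymptoticLimit L T A) (hL : IsBanachLimit L)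
    (hT : ∃ M, ∀ n : ℕ, ‖T ^ n‖ ≤ M) (n : ℕ) (x y : H) :
    ⟪A ((T ^ n) x), (T ^ n) y⟫ = ⟪A x, y⟫ := by
  induction n with
  | zero => simp
  | succ n ih =>
    rw [pow_succ', mul_apply_eq_comp, mul_apply_eq_comp, hA.inner_map_map hL hT, ih]

theorem inner_map_self_nonneg (hA : IsAsymptoticLimit L T A) (hL : IsBanachLimit L)
    (hT : ∃ M, ∀ n : ℕ, ‖T ^ n‖ ≤ M) (x : H) : 0 ≤ ⟪A x, x⟫ := by
  obtain ⟨f, hf⟩ := exists_boundedContinuousFunction_eq_inner_pow hT x x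
  rw [← hA x x f hf]
  exact hL.nonneg fun n => by
    rw [hf n, inner_self_eq_norm_sq_to_K]
    exact pow_nonneg (RCLike.ofReal_nonneg.mpr (norm_nonneg _)) 2

end IsAsymptoticLimit

end

theorem norm_L_asymptotic_limit_ge_one_general
    {H : Type*} [NormedAddCommGroup H] [InnerProductSpace ℂ H]
    (L : (ℕ →ᵇ ℂ) →L[ℂ] ℂ) (hL : IsBanachLimit L)
    (T : H →L[ℂ] H) (hpb : ∃ M > 0, ∀ n : ℕ, ‖T ^ n‖ < M)
    (A : H →L[ℂ] H)
    (hA : ∀ (x y : H) (f : ℕ →ᵇ ℂ),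
      (∀ n : ℕ, f n = ⟪(T ^ n) x, (T ^ n) y⟫) → L f = ⟪A x, y⟫)
    (hA0 : A ≠ 0) :
    1 ≤ ‖A‖ := by
  have hA' : IsAsymptoticLimit L T A := hA
  have hT : ∃ M, ∀ n : ℕ, ‖T ^ n‖ ≤ M :=
    let ⟨M, _, hM⟩ := hpb
    ⟨M, fun n => (hM n).le⟩
  obtain ⟨x, hx⟩ := exists_inner_map_self_ne_zero hA0
  obtain ⟨f, hf⟩ := exists_boundedContinuousFunction_eq_inner_pow hT x x
  have hle : ⟪A x, x⟫ ≤ ‖A‖ * ⟪A x, x⟫ := by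
    have := hL.le_map_of_forall_le (c := ⟪A x, x⟫) (f := (‖A‖ : ℂ) • f) fun n => by
      rw [← hA'.inner_map_pow_map_pow hL hT n, BoundedContinuousFunction.smul_apply, hf n,
        smul_eq_mul]
      exact inner_map_self_le_norm_mul_inner_self (hA'.inner_map_self_nonneg hL hT _)
    rwa [map_smul, hA x x f hf, smul_eq_mul] at this
  rw [Complex.eq_coe_norm_of_nonneg (hA'.inner_map_self_nonneg hL hT x), ← Complex.ofReal_mul,
    Complex.real_le_real] at hle
  exact le_of_mul_le_mul_right ((one_mul _).trans_le hle) (norm_pos_iff.mpr hx)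

/-- If `L` is a Banach limit, `T` a power-bounded operator on a complex Hilbert space and
`A` its `L`-asymptotic limit (defined by `⟨A x, y⟩ = L(⟨Tⁿ x, Tⁿ y⟩)`), and `A ≠ 0`,
then `‖A‖ ≥ 1`. -/
theorem norm_L_asymptotic_limit_ge_one
    {H : Type*} [NormedAddCommGroup H] [InnerProductSpace ℂ H] [CompleteSpace H]
    (L : (ℕ →ᵇ ℂ) →L[ℂ] ℂ) (hL : IsBanachLimit L)
    (T : H →L[ℂ] H) (hpb : ∃ M > 0, ∀ n : ℕ, ‖T ^ n‖ < M)
    (A : H →L[ℂ] H)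
    (hA : ∀ (x y : H) (f : ℕ →ᵇ ℂ),
      (∀ n : ℕ, f n = ⟪(T ^ n) x, (T ^ n) y⟫) → L f = ⟪A x, y⟫)
    (hA0 : A ≠ 0) :
    1 ≤ ‖A‖ :=
  norm_L_asymptotic_limit_ge_one_general L hL T hpb A hA hA0
end
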